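/- arXiv:1304.5397 — 3 statements merged into one kernel-verified Lean document; each statement's English description precedes it below -/
import Mathlib

section
/- The polynomial p(v) = det Ã(v), where Ã(v) = [[−v²L + C⁻¹, D],[Dᵀ, d − ξ(v−u₀)²]], is a polynomial in v of degree 2n+2 with leading coefficient a_{2n+2} = (−1)^{n+1} ξ det L, next coefficient a_{2n+1} = 2(−1)ⁿ ξ u₀ det L, and constant term a₀ = −ξ u₀² det(C⁻¹). -/
open Matrix Polynomial
private lemma aux_natDegree_det_le {m : Type*} [Fintype m] [DecidableEq m]
    (M : Matrix m m ℝ[X]) (r : m → ℕ) (h : ∀ i j, (M i j).natDegree ≤ r i) :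
    M.det.natDegree ≤ ∑ i, r i := by
  rw [Matrix.det_apply']
  refine Polynomial.natDegree_sum_le_of_forall_le _ _ fun σ _ => ?_
  refine le_trans (Polynomial.natDegree_mul_le) ?_
  rw [Polynomial.natDegree_intCast, zero_add]
  refine le_trans (Polynomial.natDegree_prod_le _ _) ?_
  calc ∑ i, (M (σ i) i).natDegree ≤ ∑ i, r (σ i) :=
        Finset.sum_le_sum fun i _ => h _ i
    _ = ∑ i, r i := Equiv.sum_comp σ r

private lemma aux_coeff_det {m : Type*} [Fintype m] [DecidableEq m]
    (M : Matrix m m ℝ[X]) (k : ℕ) (h : ∀ i j, (M i j).natDegree ≤ k) :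
    M.det.coeff (Fintype.card m * k) = (Matrix.of fun i j => (M i j).coeff k).det := by
  rw [Matrix.det_apply', Matrix.det_apply', Polynomial.finset_sum_coeff]
  refine Finset.sum_congr rfl fun σ _ => ?_
  rw [← Polynomial.C_eq_intCast, Polynomial.coeff_C_mul]
  congr 1
  simpa [Finset.card_univ] using
    Polynomial.coeff_prod_of_natDegree_le (s := Finset.univ)
      (f := fun i => M (σ i) i) (n := k) (fun p _ => h _ _)

set_option maxHeartbeats 1000000 in
theorem stmt_6 (n : ℕ) (L C : Matrix (Fin n) (Fin n) ℝ)
    (hL : L.IsSymm) (hLpd : L.PosDef) (hC : C.IsSymm) (hCpd : C.PosDef)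
    (ξ u₀ : ℝ) (hξ : 0 < ξ) (hu : 0 < u₀)
    (B : Fin n → ℝ) (hB : B = fun _ => 1)
    (D : Fin n → ℝ) (hD : D = C⁻¹ *ᵥ B)
    (d : ℝ) (hd : d = B ⬝ᵥ (C⁻¹ *ᵥ B)) :
    ∃ p : Polynomial ℝ,
      (∀ v : ℝ, p.eval v =
        (Matrix.fromBlocks (-(v ^ 2) • L + C⁻¹)
          (Matrix.of fun i (_ : Fin 1) => D i)
          (Matrix.of fun (_ : Fin 1) j => D j)
          (Matrix.of fun _ _ => d - ξ * (v - u₀) ^ 2)).det) ∧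
      p.natDegree = 2 * n + 2 ∧
      p.coeff (2 * n + 2) = (-1) ^ (n + 1) * ξ * L.det ∧
      p.coeff (2 * n + 1) = 2 * (-1) ^ n * ξ * u₀ * L.det ∧
      p.coeff 0 = -ξ * u₀ ^ 2 * C⁻¹.det := by
  classical
  have hCdet : IsUnit C.det := (ne_of_gt hCpd.det_pos).isUnit
  -- polynomial matrices
  set Qmat : Matrix (Fin n) (Fin n) ℝ[X] :=
    Matrix.of fun i j => Polynomial.C (C⁻¹ i j) - Polynomial.C (L i j) * X with hQmat
  set A : Matrix (Fin n) (Fin n) ℝ[X] :=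
    Matrix.of fun i j => Polynomial.C (C⁻¹ i j) - Polynomial.C (L i j) * X ^ 2 with hA
  set s : ℝ[X] := Polynomial.C (-ξ) * X ^ 2 + Polynomial.C (2 * ξ * u₀) * X ^ 1
      + Polynomial.C (-(ξ * u₀ ^ 2)) with hs
  set colD : Matrix (Fin n) (Fin 1) ℝ[X] := Matrix.of fun i _ => Polynomial.C (D i) with hcolD
  set rowD : Matrix (Fin 1) (Fin n) ℝ[X] := Matrix.of fun _ j => Polynomial.C (D j) with hrowD
  set M : Matrix (Fin n ⊕ Fin 1) (Fin n ⊕ Fin 1) ℝ[X] :=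
    Matrix.fromBlocks A colD rowD (Matrix.of fun _ _ => Polynomial.C d + s) with hM
  set M₀ : Matrix (Fin n ⊕ Fin 1) (Fin n ⊕ Fin 1) ℝ[X] :=
    Matrix.fromBlocks A colD rowD (Matrix.of fun _ _ => Polynomial.C d) with hM₀
  set QA : ℝ[X] := Qmat.det with hQA
  -- evaluation
  have heval : ∀ v : ℝ, (M.det).eval v =
      (Matrix.fromBlocks (-(v ^ 2) • L + C⁻¹)
          (Matrix.of fun i (_ : Fin 1) => D i)
          (Matrix.of fun (_ : Fin 1) j => D j)
          (Matrix.of fun _ _ => d - ξ * (v - u₀) ^ 2)).det := by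
    intro v
    rw [show Polynomial.eval v M.det = (Polynomial.evalRingHom v) M.det from rfl,
      RingHom.map_det]
    congr 1
    ext i j
    rcases i with i | i <;> rcases j with j | j <;>
      simp [hM, hA, hs, hcolD, hrowD, Matrix.map_apply, Matrix.add_apply, Matrix.smul_apply,
        smul_eq_mul] <;> ring
  -- A.det = expand 2 QA
  have hexp : A.det = Polynomial.expand ℝ 2 QA := by
    have hmap : A = Qmat.map (Polynomial.expand ℝ 2) := by
      ext i j
      simp [hA, hQmat, Matrix.map_apply, Polynomial.expand_X]
    rw [hmap, hQA]
    exact ((Polynomial.expand ℝ 2).toRingHom.map_det Qmat).symm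
  -- degree facts
  have hQentry : ∀ i j, (Qmat i j).natDegree ≤ 1 := by
    intro i j
    simp only [hQmat, Matrix.of_apply]
    compute_degree
  have hQAdeg : QA.natDegree ≤ n := by
    have := aux_natDegree_det_le Qmat (fun _ => 1) (fun i j => hQentry i j)
    simpa using this
  have hQAn : QA.coeff n = (-1) ^ n * L.det := by
    have h1 := aux_coeff_det Qmat 1 (fun i j => hQentry i j)
    simp only [Fintype.card_fin, mul_one] at h1
    rw [hQA, h1]
    have h2 : (Matrix.of fun i j => (Qmat i j).coeff 1) = -L := by
      ext i j
      simp [hQmat, Polynomial.coeff_C]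
    rw [h2, Matrix.det_neg]
    simp
  -- coefficients of qA := A.det
  have hq2n : A.det.coeff (2 * n) = (-1) ^ n * L.det := by
    rw [hexp, Polynomial.coeff_expand (by norm_num : 0 < 2), if_pos (dvd_mul_right 2 n)]
    rw [Nat.mul_div_cancel_left n (by norm_num : 0 < 2)]
    exact hQAn
  have hqodd : A.det.coeff (2 * n + 1) = 0 := by
    rw [hexp, Polynomial.coeff_expand (by norm_num : 0 < 2), if_neg (by omega)]
  have hq2n2 : A.det.coeff (2 * n + 2) = 0 := by
    rw [hexp, Polynomial.coeff_expand (by norm_num : 0 < 2), if_pos ⟨n + 1, by ring⟩]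
    have h3 : (2 * n + 2) / 2 = n + 1 := by omega
    rw [h3]
    exact Polynomial.coeff_eq_zero_of_natDegree_lt (lt_of_le_of_lt hQAdeg (by omega))
  -- determinant decomposition
  have hsplit : M.det = M₀.det + s * A.det := by
    have hone : ∀ x : Fin 1, x = 0 := fun x => Subsingleton.elim _ _
    have e1 : M = M.updateCol (Sum.inr 0)
        ((Sum.elim (fun i => Polynomial.C (D i)) fun _ => Polynomial.C d)
          + s • (Pi.single (Sum.inr (0 : Fin 1)) (1 : ℝ[X]) : Fin n ⊕ Fin 1 → ℝ[X])) := by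
      ext i j
      rcases i with i | i <;> rcases j with j | j <;>
        simp [Matrix.updateCol_apply, hM, hcolD, hrowD, Pi.single_apply, hone]
    have e2 : M.updateCol (Sum.inr 0)
        (Sum.elim (fun i => Polynomial.C (D i)) fun _ => Polynomial.C d) = M₀ := by
      ext i j
      rcases i with i | i <;> rcases j with j | j <;>
        simp [Matrix.updateCol_apply, hM, hM₀, hcolD, hrowD, hone]
    have e3 : M.updateCol (Sum.inr 0) ((Pi.single (Sum.inr (0 : Fin 1)) (1 : ℝ[X]) : Fin n ⊕ Fin 1 → ℝ[X]))
        = Matrix.fromBlocks A 0 rowD 1 := by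
      ext i j
      rcases i with i | i <;> rcases j with j | j <;>
        simp [Matrix.updateCol_apply, hM, hcolD, hrowD, Pi.single_apply, hone,
          Matrix.one_apply]
    calc M.det = (M.updateCol (Sum.inr 0)
        ((Sum.elim (fun i => Polynomial.C (D i)) fun _ => Polynomial.C d)
          + s • (Pi.single (Sum.inr (0 : Fin 1)) (1 : ℝ[X]) : Fin n ⊕ Fin 1 → ℝ[X]))).det := by rw [← e1]
      _ = M₀.det + s * A.det := by
          rw [Matrix.det_updateCol_add, Matrix.det_updateCol_smul, e2, e3,
            Matrix.det_fromBlocks_zero₁₂, Matrix.det_one, mul_one]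
  have hAentry : ∀ i j, (A i j).natDegree ≤ 2 := by
    intro i j
    simp only [hA, Matrix.of_apply]
    compute_degree
  have hM₀deg : M₀.det.natDegree ≤ 2 * n := by
    have := aux_natDegree_det_le M₀ (Sum.elim (fun _ => 2) fun _ => 0) ?_
    · simpa [Fintype.sum_sum_type, mul_comm] using this
    · rintro (i | i) (j | j) <;>
        simp [hM₀, hA, hcolD, hrowD, Matrix.fromBlocks_apply₁₁] <;>
        first
          | exact hAentry i j
          | compute_degree
  have hMdeg : M.det.natDegree ≤ 2 * n + 2 := by
    have h9 := aux_natDegree_det_le M (fun _ => 2) ?_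
    · simp only [Fintype.sum_sum_type, Finset.sum_const, Finset.card_univ, Fintype.card_fin,
        smul_eq_mul, Fintype.card_sum, Fintype.card_fin] at h9
      omega
    · rintro (i | i) (j | j) <;>
        simp [hM, hA, hs, hcolD, hrowD] <;>
        first
          | exact hAentry i j
          | compute_degree
  -- rewrite s * A.det
  have hdist : s * A.det = Polynomial.C (-ξ) * (A.det * X ^ 2)
      + Polynomial.C (2 * ξ * u₀) * (A.det * X ^ 1) + Polynomial.C (-(ξ * u₀ ^ 2)) * A.det := by
    rw [hs]; ring
  have hc22 : M.det.coeff (2 * n + 2) = (-1) ^ (n + 1) * ξ * L.det := by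
    rw [hsplit, Polynomial.coeff_add,
      Polynomial.coeff_eq_zero_of_natDegree_lt (lt_of_le_of_lt hM₀deg (by omega)), zero_add,
      hdist]
    simp only [Polynomial.coeff_add, Polynomial.coeff_C_mul, Polynomial.coeff_mul_X_pow']
    rw [if_pos (by omega : 2 ≤ 2 * n + 2), if_pos (by omega : 1 ≤ 2 * n + 2)]
    have i1 : 2 * n + 2 - 2 = 2 * n := by omega
    have i2 : 2 * n + 2 - 1 = 2 * n + 1 := by omega
    rw [i1, i2, hq2n, hqodd, hq2n2]
    ring
  have hc21 : M.det.coeff (2 * n + 1) = 2 * (-1) ^ n * ξ * u₀ * L.det := by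
    rw [hsplit, Polynomial.coeff_add,
      Polynomial.coeff_eq_zero_of_natDegree_lt (lt_of_le_of_lt hM₀deg (by omega)), zero_add,
      hdist]
    simp only [Polynomial.coeff_add, Polynomial.coeff_C_mul, Polynomial.coeff_mul_X_pow']
    have t1 : (if 2 ≤ 2 * n + 1 then A.det.coeff (2 * n + 1 - 2) else 0) = 0 := by
      split
      · rw [hexp, Polynomial.coeff_expand (by norm_num : 0 < 2), if_neg (by omega)]
      · rfl
    rw [t1, if_pos (by omega : 1 ≤ 2 * n + 1)]
    have i2 : 2 * n + 1 - 1 = 2 * n := by omega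
    rw [i2, hq2n, hqodd]
    ring
  -- constant coefficient
  have hc0 : M.det.coeff 0 = -ξ * u₀ ^ 2 * C⁻¹.det := by
    rw [Polynomial.coeff_zero_eq_eval_zero, heval 0]
    have hz : -((0 : ℝ) ^ 2) • L + C⁻¹ = C⁻¹ := by
      norm_num
    rw [hz]
    have hCinvdet : IsUnit (C⁻¹).det := by
      rw [Matrix.det_nonsing_inv]
      simpa [Ring.inverse_eq_inv'] using (inv_ne_zero (ne_of_gt hCpd.det_pos)).isUnit
    haveI : Invertible (C⁻¹) := (C⁻¹).invertibleOfIsUnitDet hCinvdet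
    rw [Matrix.det_fromBlocks₁₁, Matrix.invOf_eq_nonsing_inv,
      Matrix.nonsing_inv_nonsing_inv C hCdet]
    have hrow : ∀ i, (∑ j, D j * C j i) = B i := by
      intro i
      calc (∑ j, D j * C j i) = ∑ j, C i j * D j := by
            refine Finset.sum_congr rfl fun j _ => ?_
            rw [mul_comm, hC.apply]
        _ = (C *ᵥ D) i := by simp [Matrix.mulVec, dotProduct]
        _ = B i := by
            rw [hD, Matrix.mulVec_mulVec, Matrix.mul_nonsing_inv C hCdet, Matrix.one_mulVec]
    have hval : ((Matrix.of fun (_ : Fin 1) (_ : Fin 1) => d - ξ * ((0:ℝ) - u₀) ^ 2)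
        - (Matrix.of fun (_ : Fin 1) j => D j) * C * (Matrix.of fun i (_ : Fin 1) => D i))
        = Matrix.of fun (_ : Fin 1) (_ : Fin 1) => -(ξ * u₀ ^ 2) := by
      ext i j
      simp only [Matrix.sub_apply, Matrix.of_apply, Matrix.mul_apply]
      have : (∑ k, (∑ j', D j' * C j' k) * D k) = d := by
        rw [hd]
        simp only [hrow]
        simp [dotProduct, hD]
      rw [this]
      ring
    rw [hval]
    simp only [Matrix.det_fin_one, Matrix.of_apply]
    ring
  refine ⟨M.det, heval, ?_, hc22, hc21, hc0⟩
  refine le_antisymm hMdeg (Polynomial.le_natDegree_of_ne_zero ?_)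
  rw [hc22]
  have hLdet : L.det ≠ 0 := ne_of_gt hLpd.det_pos
  exact mul_ne_zero (mul_ne_zero (pow_ne_zero _ (by norm_num)) hξ.ne') hLdet
end

section
/- If q : ℝ² → ℝ is C² and satisfies the beam equation (∂ₜ + u₀∂_z)² q = 0, then the beam energy density H_b = ½(∂ₜq)² − (u₀²/2)(∂_zq)² and energy flux S_b = u₀(∂ₜq)² + u₀²(∂ₜq)(∂_zq) satisfy the conservation law ∂ₜH_b + ∂_zS_b = 0. -/
theorem stmt_11 (u₀ : ℝ) (q : ℝ → ℝ → ℝ)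
    (hq : ContDiff ℝ 2 (fun p : ℝ × ℝ => q p.1 p.2))
    (hpde : ∀ t z,
      deriv (fun s => deriv (fun s' => q s' z) s) t
        + 2 * u₀ * deriv (fun s => deriv (fun x => q s x) z) t
        + u₀ ^ 2 * deriv (fun x => deriv (fun x' => q t x') x) z = 0)
    (H S : ℝ → ℝ → ℝ)
    (hH : ∀ t z, H t z = (1 / 2) * (deriv (fun s => q s z) t) ^ 2
        - (u₀ ^ 2 / 2) * (deriv (fun x => q t x) z) ^ 2)
    (hS : ∀ t z, S t z = u₀ * (deriv (fun s => q s z) t) ^ 2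
        + u₀ ^ 2 * (deriv (fun s => q s z) t) * (deriv (fun x => q t x) z)) :
    ∀ t z, deriv (fun s => H s z) t + deriv (fun x => S t x) z = 0 := by
  intro t z
  set f : ℝ × ℝ → ℝ := fun p => q p.1 p.2 with hf_def
  have hf : ContDiff ℝ 2 f := hq
  have hdf : Differentiable ℝ f := hf.differentiable (by norm_num)
  set g : ℝ × ℝ → (ℝ × ℝ) →L[ℝ] ℝ := fderiv ℝ f with hg_def
  have hg : ContDiff ℝ 1 g := hf.fderiv_right (le_refl 2)
  have hdg : Differentiable ℝ g := hg.differentiable (by norm_num)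
  -- lines
  have lineT : ∀ (t' z' : ℝ), HasDerivAt (fun s : ℝ => ((s, z') : ℝ × ℝ)) ((1, 0) : ℝ × ℝ) t' :=
    fun t' z' => (hasDerivAt_id t').prodMk (hasDerivAt_const t' z')
  have lineZ : ∀ (t' z' : ℝ), HasDerivAt (fun x : ℝ => ((t', x) : ℝ × ℝ)) ((0, 1) : ℝ × ℝ) z' :=
    fun t' z' => (hasDerivAt_const z' t').prodMk (hasDerivAt_id z')
  -- first partials
  have hqt : ∀ (t' z' : ℝ), deriv (fun s => q s z') t' = g (t', z') (1, 0) := by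
    intro t' z'
    exact ((hdf (t', z')).hasFDerivAt.comp_hasDerivAt t' (lineT t' z')).deriv
  have hqz : ∀ (t' z' : ℝ), deriv (fun x => q t' x) z' = g (t', z') (0, 1) := by
    intro t' z'
    exact ((hdf (t', z')).hasFDerivAt.comp_hasDerivAt z' (lineZ t' z')).deriv
  -- derivatives of directional derivatives along lines
  have key : ∀ (t' z' : ℝ) (w v : ℝ × ℝ) (c : ℝ → ℝ × ℝ),
      HasDerivAt c v t' → (∀ s, c s = c s) →
      HasDerivAt (fun s => g (c s) w) (fderiv ℝ g (c t') v w) t' := by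
    intro t' z' w v c hc _
    have h1 : HasFDerivAt (fun p => g p w)
        ((g (c t')).comp (0 : (ℝ × ℝ) →L[ℝ] (ℝ × ℝ)) + (fderiv ℝ g (c t')).flip w) (c t') :=
      (hdg (c t')).hasFDerivAt.clm_apply (hasFDerivAt_const w (c t'))
    have h2 := h1.comp_hasDerivAt t' hc
    have h3 : ((g (c t')).comp (0 : (ℝ × ℝ) →L[ℝ] (ℝ × ℝ)) + (fderiv ℝ g (c t')).flip w) v
        = fderiv ℝ g (c t') v w := by simp
    rw [h3] at h2
    exact h2
  set p : ℝ × ℝ := (t, z) with hp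
  set a : ℝ := g p (1, 0) with ha
  set b : ℝ := g p (0, 1) with hb
  set D : (ℝ × ℝ) →L[ℝ] (ℝ × ℝ) →L[ℝ] ℝ := fderiv ℝ g p with hD
  have hsymm : ∀ v w, D v w = D w v :=
    second_derivative_symmetric (fun y => (hdf y).hasFDerivAt) (hdg p).hasFDerivAt
  have hAt : HasDerivAt (fun s => g (s, z) (1, 0)) (D (1, 0) (1, 0)) t :=
    key t z (1, 0) (1, 0) _ (lineT t z) (fun _ => rfl)
  have hBt : HasDerivAt (fun s => g (s, z) (0, 1)) (D (1, 0) (0, 1)) t :=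
    key t z (0, 1) (1, 0) _ (lineT t z) (fun _ => rfl)
  have hAz : HasDerivAt (fun x => g (t, x) (1, 0)) (D (0, 1) (1, 0)) z :=
    key z t (1, 0) (0, 1) _ (lineZ t z) (fun _ => rfl)
  have hBz : HasDerivAt (fun x => g (t, x) (0, 1)) (D (0, 1) (0, 1)) z :=
    key z t (0, 1) (0, 1) _ (lineZ t z) (fun _ => rfl)
  -- translate the PDE
  have pde : D (1, 0) (1, 0) + 2 * u₀ * D (1, 0) (0, 1) + u₀ ^ 2 * D (0, 1) (0, 1) = 0 := by
    have e1 : (fun s => deriv (fun s' => q s' z) s) = fun s => g (s, z) (1, 0) :=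
      funext fun s => hqt s z
    have e2 : (fun s => deriv (fun x => q s x) z) = fun s => g (s, z) (0, 1) :=
      funext fun s => hqz s z
    have e3 : (fun x => deriv (fun x' => q t x') x) = fun x => g (t, x) (0, 1) :=
      funext fun x => hqz t x
    have := hpde t z
    rw [e1, e2, e3, hAt.deriv, hBt.deriv, hBz.deriv] at this
    exact this
  -- derivative of H in t
  have hHline : (fun s => H s z)
      = fun s => (1 / 2) * (g (s, z) (1, 0)) ^ 2 - (u₀ ^ 2 / 2) * (g (s, z) (0, 1)) ^ 2 := by
    funext s; rw [hH s z, hqt s z, hqz s z]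
  have hHd : HasDerivAt (fun s => H s z)
      ((1 / 2) * (2 * a ^ 1 * D (1, 0) (1, 0)) - (u₀ ^ 2 / 2) * (2 * b ^ 1 * D (1, 0) (0, 1))) t := by
    rw [hHline]
    exact ((hAt.pow 2).const_mul (1 / 2)).sub ((hBt.pow 2).const_mul (u₀ ^ 2 / 2))
  -- derivative of S in z
  have hSline : (fun x => S t x)
      = fun x => u₀ * (g (t, x) (1, 0)) ^ 2 + u₀ ^ 2 * (g (t, x) (1, 0)) * (g (t, x) (0, 1)) := by
    funext x; rw [hS t x, hqt t x, hqz t x]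
  have hSd : HasDerivAt (fun x => S t x)
      (u₀ * (2 * a ^ 1 * D (0, 1) (1, 0))
        + ((u₀ ^ 2 * D (0, 1) (1, 0)) * b + (u₀ ^ 2 * a) * D (0, 1) (0, 1))) z := by
    rw [hSline]
    exact ((hAz.pow 2).const_mul u₀).add ((hAz.const_mul (u₀ ^ 2)).mul hBz)
  rw [hHd.deriv, hSd.deriv]
  have hs := hsymm (0, 1) (1, 0)
  linear_combination a * pde + (u₀ ^ 2 * b + 2 * u₀ * a) * hs
end

section
/- Let L, C, ξ, u₀ > 0 with u₀ ≤ v₁ := 1/√(LC) (single line case n = 1). Then the equation −ξ(v − u₀)² = R(v), with R(v) = L⁻¹C⁻²/(v₁² − v²) − C⁻¹ defined for v ≠ ±v₁, has exactly two real solutions: one in (v₁, ∞) and one in (−∞, −v₁); consequently the degree-4 dispersion polynomial (−v²L + C⁻¹)(C⁻¹ − ξ(v−u₀)²) − C⁻² has exactly one pair of non-real complex conjugate roots. -/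
namespace Stmt19Aux

noncomputable def Q (L k ξ u₀ t : ℝ) : ℝ := (k - L*t^2)*(k - ξ*(t-u₀)^2) - k^2



lemma Qcont (L k ξ u₀ : ℝ) : Continuous (Q L k ξ u₀) := by
  unfold Q; fun_prop

lemma mid {L k ξ u₀ v₁ : ℝ} (hL : 0 < L) (hk : 0 < k) (hξ : 0 < ξ) (hu : 0 < u₀)
    (hrel : L * v₁^2 = k) {t : ℝ} (h1 : -v₁ < t) (h2 : t < v₁) :
    Q L k ξ u₀ t < 0 := by
  have hv : 0 < v₁ := by linarith
  have ht2 : t^2 < v₁^2 := by nlinarith [mul_pos (by linarith : (0:ℝ) < v₁ - t) (by linarith : (0:ℝ) < v₁ + t)]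
  have hpos : 0 < k - L*t^2 := by nlinarith
  unfold Q
  rcases eq_or_ne t 0 with rfl | ht
  · nlinarith [mul_pos (mul_pos hk hξ) (mul_pos hu hu)]
  · have ht2p : 0 < t^2 := by positivity
    nlinarith [mul_nonneg (mul_nonneg hξ.le (sq_nonneg (t-u₀))) hpos.le,
      mul_pos (mul_pos hk hL) ht2p]

lemma Qv₁ {L k ξ u₀ v₁ : ℝ} (hrel : L * v₁^2 = k) : Q L k ξ u₀ v₁ = -k^2 := by
  unfold Q; linear_combination (ξ*(v₁-u₀)^2 - k)*hrel

lemma Qnegv₁ {L k ξ u₀ v₁ : ℝ} (hrel : L * v₁^2 = k) : Q L k ξ u₀ (-v₁) = -k^2 := by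
  unfold Q; linear_combination (ξ*(-v₁-u₀)^2 - k)*hrel

lemma uniqR {L k ξ u₀ v₁ : ℝ} (hL : 0 < L) (hk : 0 < k) (hξ : 0 < ξ) (hu : 0 < u₀)
    (hu₀ : u₀ ≤ v₁) (hrel : L * v₁^2 = k) {x y : ℝ} (hx : v₁ < x) (hy : v₁ < y)
    (hQx : Q L k ξ u₀ x = 0) (hQy : Q L k ξ u₀ y = 0) : x = y := by
  have hv : 0 < v₁ := lt_of_lt_of_le hu hu₀
  have key : ∀ p q : ℝ, v₁ < p → p < q → Q L k ξ u₀ p = 0 → Q L k ξ u₀ q = 0 → False := by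
    intro p q hp hpq hQp hQq
    have hq : v₁ < q := lt_trans hp hpq
    have hDp : 0 < L*p^2 - k := by nlinarith [mul_pos (by linarith : (0:ℝ) < p - v₁) (by linarith : (0:ℝ) < p + v₁)]
    have hDq : 0 < L*q^2 - k := by nlinarith [mul_pos (by linarith : (0:ℝ) < q - v₁) (by linarith : (0:ℝ) < q + v₁)]
    have hDpq : L*p^2 - k < L*q^2 - k := by nlinarith [mul_pos (by linarith : (0:ℝ) < q - p) (by linarith : (0:ℝ) < q + p)]
    have hpu : u₀ < p := lt_of_le_of_lt hu₀ hp
    have hs : (p-u₀)^2 < (q-u₀)^2 := by nlinarith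
    have Ep : ξ*(p-u₀)^2*(L*p^2-k) = k*(L*p^2-k) + k^2 := by
      unfold Q at hQp; linear_combination hQp
    have Eq' : ξ*(q-u₀)^2*(L*q^2-k) = k*(L*q^2-k) + k^2 := by
      unfold Q at hQq; linear_combination hQq
    have h1 : ξ*((q-u₀)^2-(p-u₀)^2)*((L*p^2-k)*(L*q^2-k)) = k^2*((L*p^2-k)-(L*q^2-k)) := by
      linear_combination (L*p^2-k)*Eq' - (L*q^2-k)*Ep
    nlinarith [mul_pos (mul_pos hξ (by linarith : (0:ℝ) < (q-u₀)^2-(p-u₀)^2)) (mul_pos hDp hDq),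
      mul_pos (mul_pos hk hk) (by linarith : (0:ℝ) < (L*q^2-k)-(L*p^2-k))]
  rcases lt_trichotomy x y with h | h | h
  · exact absurd (key x y hx h hQx hQy) (not_false)
  · exact h
  · exact absurd (key y x hy h hQy hQx) (not_false)

lemma uniqL {L k ξ u₀ v₁ : ℝ} (hL : 0 < L) (hk : 0 < k) (hξ : 0 < ξ) (hu : 0 < u₀)
    (hu₀ : u₀ ≤ v₁) (hrel : L * v₁^2 = k) {x y : ℝ} (hx : x < -v₁) (hy : y < -v₁)
    (hQx : Q L k ξ u₀ x = 0) (hQy : Q L k ξ u₀ y = 0) : x = y := by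
  have hv : 0 < v₁ := lt_of_lt_of_le hu hu₀
  have key : ∀ p q : ℝ, p < q → q < -v₁ → Q L k ξ u₀ p = 0 → Q L k ξ u₀ q = 0 → False := by
    intro p q hpq hq hQp hQq
    have hp : p < -v₁ := lt_trans hpq hq
    have hDp : 0 < L*p^2 - k := by nlinarith [mul_pos (by linarith : (0:ℝ) < -p - v₁) (by linarith : (0:ℝ) < -p + v₁)]
    have hDq : 0 < L*q^2 - k := by nlinarith [mul_pos (by linarith : (0:ℝ) < -q - v₁) (by linarith : (0:ℝ) < -q + v₁)]
    have hDpq : L*q^2 - k < L*p^2 - k := by nlinarith [mul_pos_of_neg_of_neg (by linarith : p - q < (0:ℝ)) (by linarith : p + q < (0:ℝ))]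
    have hqu : q - u₀ < 0 := by linarith
    have hs : (q-u₀)^2 < (p-u₀)^2 := by nlinarith
    have Ep : ξ*(p-u₀)^2*(L*p^2-k) = k*(L*p^2-k) + k^2 := by
      unfold Q at hQp; linear_combination hQp
    have Eq' : ξ*(q-u₀)^2*(L*q^2-k) = k*(L*q^2-k) + k^2 := by
      unfold Q at hQq; linear_combination hQq
    have h1 : ξ*((q-u₀)^2-(p-u₀)^2)*((L*p^2-k)*(L*q^2-k)) = k^2*((L*p^2-k)-(L*q^2-k)) := by
      linear_combination (L*p^2-k)*Eq' - (L*q^2-k)*Ep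
    nlinarith [mul_pos (mul_pos hξ (by linarith : (0:ℝ) < (p-u₀)^2-(q-u₀)^2)) (mul_pos hDp hDq),
      mul_pos (mul_pos hk hk) (by linarith : (0:ℝ) < (L*p^2-k)-(L*q^2-k))]
  rcases lt_trichotomy x y with h | h | h
  · exact absurd (key x y h hy hQx hQy) (not_false)
  · exact h
  · exact absurd (key y x h hx hQy hQx) (not_false)
lemma prodbound {k A B : ℝ} (hk : 0 < k) (hA : 3*k ≤ A) (hB : 2*k ≤ B) :
    0 < (k - A)*(k - B) - k^2 := by
  nlinarith [mul_nonneg (by linarith : (0:ℝ) ≤ A - 3*k) (by linarith : (0:ℝ) ≤ B - 2*k),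
    mul_pos hk hk, mul_nonneg hk.le (by linarith : (0:ℝ) ≤ A - 3*k),
    mul_nonneg hk.le (by linarith : (0:ℝ) ≤ B - 2*k)]

lemma exRL {L k ξ u₀ v₁ : ℝ} (hL : 0 < L) (hk : 0 < k) (hξ : 0 < ξ) (hu : 0 < u₀)
    (hu₀ : u₀ ≤ v₁) (hrel : L * v₁^2 = k) :
    (∃ a, v₁ < a ∧ Q L k ξ u₀ a = 0) ∧ (∃ b, b < -v₁ ∧ Q L k ξ u₀ b = 0) := by
  have hv : 0 < v₁ := lt_of_lt_of_le hu hu₀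
  set s1 := Real.sqrt (3*k/L) with hs1def
  set s2 := Real.sqrt (2*k/ξ) with hs2def
  set M := s1 + u₀ + s2 with hMdef
  have hs1n : 0 ≤ s1 := Real.sqrt_nonneg _
  have hs2n : 0 ≤ s2 := Real.sqrt_nonneg _
  have hs1' : s1^2 * L = 3*k := by
    rw [hs1def, Real.sq_sqrt (by positivity : (0:ℝ) ≤ 3*k/L)]
    field_simp
  have hs2' : s2^2 * ξ = 2*k := by
    rw [hs2def, Real.sq_sqrt (by positivity : (0:ℝ) ≤ 2*k/ξ)]
    field_simp
  have hvs1 : v₁ < s1 := by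
    have h1 : v₁^2 < 3*k/L := by
      rw [lt_div_iff₀ hL]; nlinarith
    have := Real.lt_sqrt hv.le (y := 3*k/L)
    rw [← hs1def] at this
    exact this.mpr h1
  have hvM : v₁ < M := by simp only [hMdef]; linarith
  have hLM : 3*k ≤ L*M^2 := by nlinarith [mul_nonneg (mul_nonneg hL.le (by linarith : (0:ℝ) ≤ M - s1)) (by linarith : (0:ℝ) ≤ M + s1)]
  have hxMp : 2*k ≤ ξ*(M-u₀)^2 := by
    have hMu : s2 ≤ M - u₀ := by simp only [hMdef]; linarith
    nlinarith [mul_nonneg (mul_nonneg hξ.le (by linarith : (0:ℝ) ≤ (M-u₀) - s2)) (by linarith : (0:ℝ) ≤ (M-u₀) + s2)]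
  have hxMn : 2*k ≤ ξ*(-M-u₀)^2 := by
    have hMu : s2 ≤ M + u₀ := by simp only [hMdef]; linarith
    nlinarith [mul_nonneg (mul_nonneg hξ.le (by linarith : (0:ℝ) ≤ (M+u₀) - s2)) (by linarith : (0:ℝ) ≤ (M+u₀) + s2)]
  have hQM : 0 < Q L k ξ u₀ M := by
    have := prodbound hk hLM hxMp
    unfold Q; linarith [this]
  have hQMn : 0 < Q L k ξ u₀ (-M) := by
    have h3 : 3*k ≤ L*(-M)^2 := by rw [neg_sq]; exact hLM
    have := prodbound hk h3 hxMn
    unfold Q; linarith [this]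
  have hQv₁ : Q L k ξ u₀ v₁ < 0 := by
    have : Q L k ξ u₀ v₁ = -k^2 := by unfold Q; linear_combination (ξ*(v₁-u₀)^2 - k)*hrel
    rw [this]; nlinarith
  have hQv₁n : Q L k ξ u₀ (-v₁) < 0 := by
    have : Q L k ξ u₀ (-v₁) = -k^2 := by unfold Q; linear_combination (ξ*(-v₁-u₀)^2 - k)*hrel
    rw [this]; nlinarith
  have hcont : Continuous (Q L k ξ u₀) := by unfold Q; fun_prop
  constructor
  · obtain ⟨a, ha, hQa⟩ := intermediate_value_Ioo hvM.le hcont.continuousOn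
      (Set.mem_Ioo.mpr ⟨hQv₁, hQM⟩)
    exact ⟨a, ha.1, hQa⟩
  · obtain ⟨b, hb, hQb⟩ := intermediate_value_Ioo' (by linarith : -M ≤ -v₁) hcont.continuousOn
      (Set.mem_Ioo.mpr ⟨hQv₁n, hQMn⟩)
    exact ⟨b, hb.2, hQb⟩

lemma classify {L k ξ u₀ v₁ : ℝ} (hL : 0 < L) (hk : 0 < k) (hξ : 0 < ξ) (hu : 0 < u₀)
    (hu₀ : u₀ ≤ v₁) (hrel : L * v₁^2 = k) {a b t : ℝ} (ha : v₁ < a) (hb : b < -v₁)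
    (hQa : Q L k ξ u₀ a = 0) (hQb : Q L k ξ u₀ b = 0) (ht : Q L k ξ u₀ t = 0) :
    t = a ∨ t = b := by
  have hv : 0 < v₁ := lt_of_lt_of_le hu hu₀
  rcases lt_trichotomy t v₁ with h | h | h
  · rcases lt_trichotomy t (-v₁) with h' | h' | h'
    · exact Or.inr (uniqL hL hk hξ hu hu₀ hrel h' hb ht hQb)
    · exfalso; rw [h', Qnegv₁ hrel] at ht; nlinarith
    · exact absurd ht (ne_of_lt (mid hL hk hξ hu hrel h' h))
  · exfalso; rw [h, Qv₁ hrel] at ht; nlinarith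
  · exact Or.inl (uniqR hL hk hξ hu hu₀ hrel h ha ht hQa)

end Stmt19Aux

open Stmt19Aux in
set_option maxHeartbeats 1000000 in
theorem stmt_19 (L C ξ u₀ : ℝ) (hL : 0 < L) (hC : 0 < C) (hξ : 0 < ξ)
    (hu : 0 < u₀) (v₁ : ℝ) (hv₁ : v₁ = 1 / Real.sqrt (L * C))
    (hu₀ : u₀ ≤ v₁)
    (R : ℝ → ℝ) (hR : ∀ v, R v = L⁻¹ * C⁻¹ ^ 2 / (v₁ ^ 2 - v ^ 2) - C⁻¹) :
    (∃ a b : ℝ, a ∈ Set.Ioi v₁ ∧ b ∈ Set.Iio (-v₁) ∧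
      -ξ * (a - u₀) ^ 2 = R a ∧ -ξ * (b - u₀) ^ 2 = R b ∧
      ∀ v : ℝ, v ≠ v₁ → v ≠ -v₁ → -ξ * (v - u₀) ^ 2 = R v → v = a ∨ v = b) ∧
    (∃ z : ℂ, z.im ≠ 0 ∧
      (-(z ^ 2) * L + (C : ℂ)⁻¹) * ((C : ℂ)⁻¹ - ξ * (z - u₀) ^ 2) - (C : ℂ)⁻¹ ^ 2 = 0 ∧
      (-((starRingEnd ℂ) z ^ 2) * L + (C : ℂ)⁻¹)
          * ((C : ℂ)⁻¹ - ξ * ((starRingEnd ℂ) z - u₀) ^ 2) - (C : ℂ)⁻¹ ^ 2 = 0 ∧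
      ∀ w : ℂ, w.im ≠ 0 →
        (-(w ^ 2) * L + (C : ℂ)⁻¹) * ((C : ℂ)⁻¹ - ξ * (w - u₀) ^ 2) - (C : ℂ)⁻¹ ^ 2 = 0 →
        w = z ∨ w = (starRingEnd ℂ) z) := by
  have hLC : 0 < L * C := mul_pos hL hC
  have hv : 0 < v₁ := by rw [hv₁]; positivity
  have hkpos : (0:ℝ) < C⁻¹ := by positivity
  have hrel : L * v₁^2 = C⁻¹ := by
    rw [hv₁, div_pow, one_pow, Real.sq_sqrt hLC.le]
    field_simp
  obtain ⟨⟨a, ha, hQa⟩, ⟨b, hb, hQb⟩⟩ := exRL hL hkpos hξ hu hu₀ hrel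
  have hclass : ∀ t, Q L C⁻¹ ξ u₀ t = 0 → t = a ∨ t = b :=
    fun t ht => classify hL hkpos hξ hu hu₀ hrel ha hb hQa hQb ht
  have hQR : ∀ v : ℝ, v ≠ v₁ → v ≠ -v₁ → ((-ξ*(v-u₀)^2 = R v) ↔ Q L C⁻¹ ξ u₀ v = 0) := by
    intro v h1 h2
    have hD : v₁^2 - v^2 ≠ 0 := by
      intro h
      have h' : (v₁ - v)*(v₁ + v) = 0 := by linear_combination h
      rcases mul_eq_zero.mp h' with h'' | h''
      · exact h1 (by linarith)
      · exact h2 (by linarith)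
    have hkey : Q L C⁻¹ ξ u₀ v
        = (L*(v₁^2-v^2)) * (-ξ*(v-u₀)^2 - (L⁻¹*C⁻¹^2/(v₁^2-v^2) - C⁻¹)) := by
      unfold Q
      have hLD : C⁻¹ - L*v^2 = L*(v₁^2 - v^2) := by linear_combination -hrel
      rw [hLD]
      field_simp
      ring
    constructor
    · intro hE
      rw [hkey, hE, hR v, sub_self, mul_zero]
    · intro hQ
      rw [hkey] at hQ
      rcases mul_eq_zero.mp hQ with h | h
      · exact absurd h (mul_ne_zero hL.ne' hD)
      · rw [hR v]; linarith [sub_eq_zero.mp h]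
  constructor
  · refine ⟨a, b, ha, hb, ?_, ?_, ?_⟩
    · exact (hQR a (ne_of_gt ha) (ne_of_gt (by have := ha; linarith))).mpr hQa
    · exact (hQR b (ne_of_lt (by have := hb; linarith)) (ne_of_lt hb)).mpr hQb
    · intro v h1 h2 hE
      exact hclass v ((hQR v h1 h2).mp hE)
  · -- Part 2: complex conjugate pair
    have hLξ : (0:ℝ) < L*ξ := mul_pos hL hξ
    have hane : a ≠ b := by have h1 := ha; have h2 := hb; intro h; rw [h] at h1; exact absurd h1 (by linarith)
    set h1 : ℝ := L*ξ*(a+b-2*u₀) with hh1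
    set h0 : ℝ := L*ξ*u₀^2 - (L+ξ)*C⁻¹ + (a+b)*h1 - L*ξ*(a*b) with hh0
    set r1 : ℝ := 2*ξ*u₀*C⁻¹ + (a+b)*h0 - (a*b)*h1 with hr1d
    set r0 : ℝ := -ξ*u₀^2*C⁻¹ - (a*b)*h0 with hr0d
    have hdivrem : ∀ t, Q L C⁻¹ ξ u₀ t = (t-a)*(t-b)*(L*ξ*t^2 + h1*t + h0) + r1*t + r0 := by
      intro t
      simp only [hr1d, hr0d, hh0, hh1]
      unfold Q
      ring
    have ea : r1*a + r0 = 0 := by have h := hdivrem a; rw [hQa] at h; linear_combination -h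
    have eb : r1*b + r0 = 0 := by have h := hdivrem b; rw [hQb] at h; linear_combination -h
    have hr1z : r1 = 0 := by
      have h' : r1*(a-b) = 0 := by linear_combination ea - eb
      rcases mul_eq_zero.mp h' with h'' | h''
      · exact h''
      · exact absurd (sub_eq_zero.mp h'') hane
    have hr0z : r0 = 0 := by linear_combination ea - a*hr1z
    have hfac : ∀ t, Q L C⁻¹ ξ u₀ t = (t-a)*(t-b)*(L*ξ*t^2 + h1*t + h0) := by
      intro t; rw [hdivrem t, hr1z, hr0z]; ring
    have E1 : 2*ξ*u₀*C⁻¹ + (a+b)*h0 - (a*b)*h1 = 0 := by rw [← hr1d]; exact hr1z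
    have E0 : -ξ*u₀^2*C⁻¹ - (a*b)*h0 = 0 := by rw [← hr0d]; exact hr0z
    have hHa : L*ξ*a^2 + h1*a + h0 ≠ 0 := by
      intro hH
      obtain ⟨c, hc⟩ : ∃ c, L*ξ*c = -(L*ξ*a) - h1 := ⟨(-(L*ξ*a) - h1)/(L*ξ), by field_simp⟩
      have hHc2 : L*ξ*(L*ξ*c^2 + h1*c + h0) = 0 := by
        linear_combination (L*ξ)*hH + (L*ξ*(c-a))*hc
      have hHc : L*ξ*c^2 + h1*c + h0 = 0 := by
        rcases mul_eq_zero.mp hHc2 with h | h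
        · exact absurd h hLξ.ne'
        · exact h
      have hQc : Q L C⁻¹ ξ u₀ c = 0 := by rw [hfac c, hHc, mul_zero]
      rcases hclass c hQc with hca | hcb
      · -- triple root at a
        have hh1a : h1 = -(2*(L*ξ)*a) := by rw [hca] at hc; linarith
        have hbval : L*ξ*(3*a + b - 2*u₀) = 0 := by linear_combination hh1a - hh1
        have hbv : b = 2*u₀ - 3*a := by
          have h' := (mul_eq_zero.mp hbval).resolve_left hLξ.ne'
          linarith
        have hh0a : h0 = L*ξ*a^2 := by linear_combination hH - a*hh1a
        have hi : L*ξ*(4*a^3 - 3*u₀*a^2 - u₀*v₁^2)*2 = 0 := by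
          linear_combination (-1)*E1 - 2*ξ*u₀*hrel - (a*b)*hh1a + (a+b)*hh0a + 3*L*ξ*a^2*hbv
        have hii : L*ξ*(3*a^4 - 2*u₀*a^3 - u₀^2*v₁^2) = 0 := by
          linear_combination E0 - ξ*u₀^2*hrel + L*ξ*a^3*hbv + (a*b)*hh0a
        have hkey : L*ξ*(a^2*(a-u₀)^2) = 0 := by
          linear_combination (-u₀/6)*hi + (1/3)*hii
        have hA : (0:ℝ) < a := by linarith
        have hAu : (0:ℝ) < a - u₀ := by linarith
        exact absurd hkey (mul_pos hLξ (mul_pos (pow_pos hA 2) (pow_pos hAu 2))).ne'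
      · -- double-double
        have hh1ab : h1 = -(L*ξ)*(a+b) := by rw [hcb] at hc; linarith
        have hh0ab : h0 = L*ξ*(a*b) := by linear_combination hH - a*hh1ab
        have hq1 : Q L C⁻¹ ξ u₀ u₀ = L*ξ*((u₀-a)*(u₀-b))^2 := by
          rw [hfac u₀]
          linear_combination ((u₀-a)*(u₀-b)*u₀)*hh1ab + ((u₀-a)*(u₀-b))*hh0ab
        have hq2 : Q L C⁻¹ ξ u₀ u₀ = -(L*u₀^2*C⁻¹) := by unfold Q; ring
        have h' : L*ξ*((u₀-a)*(u₀-b))^2 = -(L*u₀^2*C⁻¹) := by rw [← hq1, hq2]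
        have hge : 0 ≤ L*ξ*((u₀-a)*(u₀-b))^2 := mul_nonneg hLξ.le (sq_nonneg _)
        have hlt : (0:ℝ) < L*u₀^2*C⁻¹ := by positivity
        linarith
    have hHb : L*ξ*b^2 + h1*b + h0 ≠ 0 := by
      intro hH
      obtain ⟨c, hc⟩ : ∃ c, L*ξ*c = -(L*ξ*b) - h1 := ⟨(-(L*ξ*b) - h1)/(L*ξ), by field_simp⟩
      have hHc2 : L*ξ*(L*ξ*c^2 + h1*c + h0) = 0 := by
        linear_combination (L*ξ)*hH + (L*ξ*(c-b))*hc
      have hHc : L*ξ*c^2 + h1*c + h0 = 0 := by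
        rcases mul_eq_zero.mp hHc2 with h | h
        · exact absurd h hLξ.ne'
        · exact h
      have hQc : Q L C⁻¹ ξ u₀ c = 0 := by rw [hfac c, hHc, mul_zero]
      rcases hclass c hQc with hca | hcb
      · rw [hca] at hHc; exact hHa hHc
      · -- triple root at b
        have hh1b : h1 = -(2*(L*ξ)*b) := by rw [hcb] at hc; linarith
        have habval : L*ξ*(a + 3*b - 2*u₀) = 0 := by linear_combination hh1b - hh1
        have hav : a = 2*u₀ - 3*b := by
          have h' := (mul_eq_zero.mp habval).resolve_left hLξ.ne'
          linarith
        have hh0b : h0 = L*ξ*b^2 := by linear_combination hH - b*hh1b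
        have hfin : L*ξ*(u₀*v₁^2 + 3*u₀*b^2 - 4*b^3) = 0 := by
          linear_combination (1/2)*E1 + ξ*u₀*hrel - ((a+b)/2)*hh0b + ((a*b)/2)*hh1b - (3*L*ξ*b^2/2)*hav
        have hbneg : b < 0 := by linarith
        have hposs : (0:ℝ) < u₀*v₁^2 + 3*u₀*b^2 - 4*b^3 := by
          have t1 : (0:ℝ) < u₀*v₁^2 := by positivity
          have t2 : (0:ℝ) ≤ 3*(u₀*b^2) := by positivity
          have t3 : (0:ℝ) < -b^3 := by
            have h3 : (0:ℝ) < (-b)^3 := pow_pos (by linarith) 3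
            linarith [h3, (by ring : (-b)^3 = -b^3)]
          linarith
        exact absurd hfin (mul_pos hLξ hposs).ne'
    have hHnoroot : ∀ r : ℝ, L*ξ*r^2 + h1*r + h0 ≠ 0 := by
      intro r hr
      have hQr : Q L C⁻¹ ξ u₀ r = 0 := by rw [hfac r, hr, mul_zero]
      rcases hclass r hQr with rfl | rfl
      · exact hHa hr
      · exact hHb hr
    have hdisc : 0 < 4*(L*ξ)*h0 - h1^2 := by
      by_contra hcon
      push_neg at hcon
      have hd2 : Real.sqrt (h1^2 - 4*(L*ξ)*h0)^2 = h1^2 - 4*(L*ξ)*h0 :=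
        Real.sq_sqrt (by linarith)
      refine hHnoroot ((-h1 + Real.sqrt (h1^2 - 4*(L*ξ)*h0))/(2*(L*ξ))) ?_
      have expand : L*ξ*((-h1 + Real.sqrt (h1^2 - 4*(L*ξ)*h0))/(2*(L*ξ)))^2
            + h1*((-h1 + Real.sqrt (h1^2 - 4*(L*ξ)*h0))/(2*(L*ξ))) + h0
          = (Real.sqrt (h1^2 - 4*(L*ξ)*h0)^2 - (h1^2 - 4*(L*ξ)*h0))/(4*(L*ξ)) := by
        field_simp
        ring
      rw [expand, hd2, sub_self, zero_div]
    have hd0 : 0 < Real.sqrt (4*(L*ξ)*h0 - h1^2) := Real.sqrt_pos.mpr hdisc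
    set im : ℝ := Real.sqrt (4*(L*ξ)*h0 - h1^2)/(2*(L*ξ)) with him
    set re : ℝ := -h1/(2*(L*ξ)) with hre
    have him0 : 0 < im := by rw [him]; exact div_pos hd0 (by positivity)
    have hre' : 2*(L*ξ)*re = -h1 := by rw [hre]; field_simp
    have him' : (2*(L*ξ))^2*im^2 = 4*(L*ξ)*h0 - h1^2 := by
      rw [him, div_pow, Real.sq_sqrt hdisc.le]
      field_simp
    set z : ℂ := (re:ℂ) + (im:ℂ)*Complex.I with hz
    have hzim : z.im = im := by simp [hz]
    have hzconj : (starRingEnd ℂ) z = (re:ℂ) - (im:ℂ)*Complex.I := by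
      rw [hz, map_add, map_mul, Complex.conj_ofReal, Complex.conj_ofReal, Complex.conj_I]
      ring
    have hre'C : 2*((L:ℂ)*(ξ:ℂ))*(re:ℂ) = -(h1:ℂ) := by
      exact_mod_cast congrArg (Complex.ofReal) hre'
    have him'C : (2*((L:ℂ)*(ξ:ℂ)))^2*(im:ℂ)^2 = 4*((L:ℂ)*(ξ:ℂ))*(h0:ℂ) - (h1:ℂ)^2 := by
      exact_mod_cast congrArg (Complex.ofReal) him'
    have h1C : (h1:ℂ) = (L:ℂ)*(ξ:ℂ)*((a:ℂ)+(b:ℂ)-2*(u₀:ℂ)) := by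
      exact_mod_cast congrArg (Complex.ofReal) hh1
    have h0C : (h0:ℂ) = (L:ℂ)*(ξ:ℂ)*(u₀:ℂ)^2 - ((L:ℂ)+(ξ:ℂ))*(C:ℂ)⁻¹
        + ((a:ℂ)+(b:ℂ))*(h1:ℂ) - (L:ℂ)*(ξ:ℂ)*((a:ℂ)*(b:ℂ)) := by
      exact_mod_cast congrArg (Complex.ofReal) hh0
    have E1C : 2*(ξ:ℂ)*(u₀:ℂ)*(C:ℂ)⁻¹ + ((a:ℂ)+(b:ℂ))*(h0:ℂ) - ((a:ℂ)*(b:ℂ))*(h1:ℂ) = 0 := by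
      exact_mod_cast congrArg (Complex.ofReal) E1
    have E0C : -(ξ:ℂ)*(u₀:ℂ)^2*(C:ℂ)⁻¹ - ((a:ℂ)*(b:ℂ))*(h0:ℂ) = 0 := by
      exact_mod_cast congrArg (Complex.ofReal) E0
    have hfacC : ∀ w : ℂ, (-(w^2)*(L:ℂ) + (C:ℂ)⁻¹)*((C:ℂ)⁻¹ - (ξ:ℂ)*(w - (u₀:ℂ))^2) - (C:ℂ)⁻¹^2
        = (w - (a:ℂ))*(w - (b:ℂ))*((L:ℂ)*(ξ:ℂ)*w^2 + (h1:ℂ)*w + (h0:ℂ)) := by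
      intro w
      linear_combination (-w^3)*h1C - w^2*h0C + w*E1C + E0C
    have hLξC : ((L:ℂ)*(ξ:ℂ)) ≠ 0 :=
      mul_ne_zero (Complex.ofReal_ne_zero.mpr hL.ne') (Complex.ofReal_ne_zero.mpr hξ.ne')
    have h4 : (4:ℂ)*((L:ℂ)*(ξ:ℂ)) ≠ 0 := mul_ne_zero (by norm_num) hLξC
    have hquadC : ∀ w : ℂ, (L:ℂ)*(ξ:ℂ)*w^2 + (h1:ℂ)*w + (h0:ℂ)
        = (L:ℂ)*(ξ:ℂ)*(w - z)*(w - (starRingEnd ℂ) z) := by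
      intro w
      refine mul_left_cancel₀ h4 ?_
      rw [hzconj, hz]
      linear_combination (4*(L:ℂ)*(ξ:ℂ)*w + ((h1:ℂ) - 2*(L:ℂ)*(ξ:ℂ)*(re:ℂ)))*hre'C
        - him'C + (4*((L:ℂ)*(ξ:ℂ))^2*(im:ℂ)^2)*Complex.I_sq
    refine ⟨z, ?_, ?_, ?_, ?_⟩
    · rw [hzim]; exact him0.ne'
    · rw [hfacC z, hquadC z]
      simp
    · rw [hfacC ((starRingEnd ℂ) z), hquadC ((starRingEnd ℂ) z)]
      simp
    · intro w hwim hw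
      rw [hfacC w, hquadC w] at hw
      rcases mul_eq_zero.mp hw with h | h
      · rcases mul_eq_zero.mp h with h' | h'
        · exact absurd (by rw [sub_eq_zero.mp h']; exact Complex.ofReal_im a) hwim
        · exact absurd (by rw [sub_eq_zero.mp h']; exact Complex.ofReal_im b) hwim
      · rcases mul_eq_zero.mp h with h' | h'
        · rcases mul_eq_zero.mp h' with h'' | h''
          · exact absurd h'' hLξC
          · exact Or.inl (sub_eq_zero.mp h'')
        · exact Or.inr (sub_eq_zero.mp h')
end
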